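/- For all finsets U and V of ι with U ⊆ V, one has F_U * F_V = F_U in R (multiplication rule 20 of the Multiplication Rewriting Principle: the inclusion case collapses the product to the smaller power-set sum). -/

import Mathlib

variable {ι : Type*} [DecidableEq ι]

/-- Monomial semantics: `m S` evaluates an assignment `a` to `∏ i ∈ S, a i`. -/
def m (S : Finset ι) : (ι → ZMod 2) → ZMod 2 :=
  fun a => ∏ i ∈ S, a i

/-- Power-set sum semantics: `F U` evaluates `a` to the sum over nonempty subsets `A ⊆ U`
of `∏ i ∈ A, a i`. -/
def F (U : Finset ι) : (ι → ZMod 2) → ZMod 2 :=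
  fun a => ∑ A ∈ U.powerset.erase ∅, ∏ i ∈ A, a i

/-!
Expanding `P U = ∏ i ∈ U, (1 + a i)` over the subsets of `U` gives `F U a = P U - 1`. For
`U ⊆ V`, `P V = P U * q` with `q` the product over `V \ U`, and since every element of `ZMod 2`
is idempotent, `(p - 1) * (p * q - 1) = q * (p * p - p) + (p - 1) - 2 * (p - 1) = p - 1`.
-/

theorem Finset.sum_powerset_erase_empty_prod {R : Type*} [CommRing R] (s : Finset ι)
    (f : ι → R) : ∑ t ∈ s.powerset.erase ∅, ∏ i ∈ t, f i = ∏ i ∈ s, (1 + f i) - 1 := by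
  rw [prod_one_add, sum_erase_eq_sub (empty_mem_powerset s), prod_empty]

theorem F_apply (U : Finset ι) (a : ι → ZMod 2) : F U a = ∏ i ∈ U, (1 + a i) - 1 :=
  U.sum_powerset_erase_empty_prod a

theorem ZMod.isIdempotentElem_two (x : ZMod 2) : IsIdempotentElem x :=
  (sq x).symm.trans (ZMod.pow_card x)

theorem IsIdempotentElem.sub_one_mul_mul_sub_one {R : Type*} [CommRing R] [CharP R 2] {p : R}
    (hp : IsIdempotentElem p) (q : R) : (p - 1) * (p * q - 1) = p - 1 := by
  linear_combination q * hp.eq + (1 - p) * CharTwo.two_eq_zero (R := R)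

theorem stmt7 (U V : Finset ι) (h : U ⊆ V) :
    F U * F V = F U := by
  funext a
  rw [Pi.mul_apply, F_apply, F_apply, ← Finset.prod_sdiff h, mul_comm _ (∏ i ∈ U, _)]
  exact (ZMod.isIdempotentElem_two _).sub_one_mul_mul_sub_one _
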